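/- arXiv:1610.02278 — 11 statements merged into one kernel-verified Lean document; each statement's English description precedes it below -/
import Mathlib

section
/- If I is a monomial ideal in K[x_1,...,x_n] minimally generated by monomials f_1,...,f_ν with height(I) ≥ 2, then lcm(Î) = lcm(I), where Î is the LCM-dual of I generated by the monomials lcm(I)/f_i. -/
open MvPolynomial

/-- The height of an ideal: the infimum of the heights of primes containing it. -/
noncomputable def idealHeight {R : Type*} [CommRing R] (I : Ideal R) : ℕ∞ :=
  ⨅ (P : PrimeSpectrum R) (_ : I ≤ P.asIdeal), Order.height P

lemma mv_prime_X {n : ℕ} {K : Type*} [Field K] (k : Fin n) :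
    Prime (X k : MvPolynomial (Fin n) K) := by
  let e := (renameEquiv K (Equiv.optionSubtypeNe k).symm).trans
    (optionEquivLeft K {b : Fin n // b ≠ k})
  have he : e (X k) = Polynomial.X := by
    simp [e, Equiv.optionSubtypeNe_symm_self, optionEquivLeft_X_none]
  have := (MulEquiv.prime_iff e.toRingEquiv.toMulEquiv
    (p := (X k : MvPolynomial (Fin n) K))).mp
  apply this
  show Prime (e (X k))
  rw [he]
  exact Polynomial.prime_X

lemma prime_lt_spanX_eq_bot {n : ℕ} {K : Type*} [Field K] (k : Fin n)
    (Q : Ideal (MvPolynomial (Fin n) K)) (hQ : Q.IsPrime)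
    (hlt : Q < Ideal.span {(X k : MvPolynomial (Fin n) K)}) : Q = ⊥ := by
  by_contra hne
  obtain ⟨g, hgQ, hg0⟩ := Submodule.exists_mem_ne_zero_of_ne_bot hne
  obtain ⟨m, b, hXb, hfac⟩ := WfDvdMonoid.max_power_factor hg0 (mv_prime_X (K := K) k).irreducible
  have hbQ : b ∉ Q := fun h => hXb (Ideal.mem_span_singleton.mp (hlt.le h))
  have hpow : (X k : MvPolynomial (Fin n) K) ^ m ∈ Q := by
    rcases hQ.mem_or_mem (hfac ▸ hgQ) with h | h
    · exact h
    · exact absurd h hbQ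
  have hXQ : (X k : MvPolynomial (Fin n) K) ∈ Q := hQ.mem_of_pow_mem m hpow
  exact absurd ((Ideal.span_singleton_le_iff_mem Q).mpr hXQ) (not_le_of_gt hlt)

lemma height_spanX_le_one {n : ℕ} {K : Type*} [Field K] (k : Fin n)
    (P : PrimeSpectrum (MvPolynomial (Fin n) K))
    (hP : P.asIdeal = Ideal.span {(X k : MvPolynomial (Fin n) K)}) :
    Order.height P ≤ 1 := by
  have h1 : (1 : ℕ∞) = ((1 : ℕ) : ℕ∞) := rfl
  rw [h1, Order.height_le_coe_iff]
  intro y hy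
  have hybot : y.asIdeal = ⊥ := by
    apply prime_lt_spanX_eq_bot k y.asIdeal y.isPrime
    rw [← hP]
    exact hy
  have : Order.height y = 0 := by
    rw [Order.height_eq_zero]
    intro z hz
    have hz' : z.asIdeal ≤ y.asIdeal := hz
    have : z.asIdeal = y.asIdeal := le_antisymm hz' (by rw [hybot]; exact bot_le)
    exact le_of_eq (PrimeSpectrum.ext this.symm)
  simp [this]

/-- If `I` is a monomial ideal minimally generated by the monomials with
exponent vectors `f 1, …, f ν` and `height I ≥ 2`, then the lcm of the LCM-dual equals
the lcm of `I` (at the level of exponent vectors, lcm = pointwise sup and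
`lcm(I)/f i` has exponent vector `sup f - f i`). -/
theorem lcm_dual_lcm_eq {n ν : ℕ} {K : Type*} [Field K]
    (f : Fin ν → (Fin n →₀ ℕ))
    (I : Ideal (MvPolynomial (Fin n) K))
    (hI : I = Ideal.span (Set.range fun i => monomial (f i) (1 : K)))
    (hmin : ∀ i j, f i ≤ f j → i = j)
    (hht : 2 ≤ idealHeight I) :
    (Finset.univ.sup fun i => Finset.univ.sup f - f i) = Finset.univ.sup f := by
  rcases Nat.eq_zero_or_pos ν with hν | hν
  · subst hν
    simp
  -- key claim: for every variable k there is a generator not involving x_k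
  have key : ∀ k : Fin n, ∃ i : Fin ν, f i k = 0 := by
    intro k
    by_contra hcon
    push_neg at hcon
    -- then I ≤ (X k)
    have hle : I ≤ Ideal.span {(X k : MvPolynomial (Fin n) K)} := by
      rw [hI, Ideal.span_le]
      rintro _ ⟨i, rfl⟩
      rw [SetLike.mem_coe, Ideal.mem_span_singleton]
      refine ⟨monomial (f i - Finsupp.single k 1) 1, ?_⟩
      rw [X, monomial_mul, one_mul, add_tsub_cancel_of_le]
      rw [Finsupp.single_le_iff]
      exact Nat.one_le_iff_ne_zero.mpr (hcon i)
    have hprime : (Ideal.span {(X k : MvPolynomial (Fin n) K)}).IsPrime :=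
      (Ideal.span_singleton_prime (MvPolynomial.X_ne_zero k)).mpr (mv_prime_X k)
    set P : PrimeSpectrum (MvPolynomial (Fin n) K) :=
      ⟨Ideal.span {(X k : MvPolynomial (Fin n) K)}, hprime⟩
    have h2 : idealHeight I ≤ Order.height P := by
      exact iInf₂_le P hle
    have h3 : Order.height P ≤ 1 := height_spanX_le_one k P rfl
    have : (2 : ℕ∞) ≤ 1 := le_trans hht (le_trans h2 h3)
    norm_num at this
  apply le_antisymm
  · exact Finset.sup_le fun i _ => tsub_le_self
  · intro k
    obtain ⟨i, hi⟩ := key k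
    have h1 : (Finset.univ.sup f - f i) ≤
        Finset.univ.sup fun i => Finset.univ.sup f - f i :=
      Finset.le_sup (f := fun i => Finset.univ.sup f - f i) (Finset.mem_univ i)
    have h2 := h1 k
    rw [Finsupp.tsub_apply, hi, Nat.sub_zero] at h2
    exact h2
end

section
/- If I is a monomial ideal in K[x_1,...,x_n] with height(I) ≥ 2, then the LCM-dual of the LCM-dual of I equals I; that is, the double LCM-dual recovers I. -/
open MvPolynomial

/-- `X k` is a prime element of a multivariate polynomial ring over a domain. -/
lemma mv_prime_X_s1 {σ : Type*} {R : Type*} [CommRing R] [IsDomain R] (k : σ) :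
    Prime (X k : MvPolynomial σ R) := by
  classical
  let e : MvPolynomial σ R ≃+* Polynomial (MvPolynomial {b : σ // b ≠ k} R) :=
    ((renameEquiv R (Equiv.optionSubtypeNe k).symm).trans
      (optionEquivLeft R {b : σ // b ≠ k})).toRingEquiv
  have he : e (X k) = Polynomial.X := by
    simp [e, Equiv.optionSubtypeNe_symm_self, optionEquivLeft_X_none]
  rw [← MulEquiv.prime_iff e.toMulEquiv]
  rw [show e.toMulEquiv (X k) = e (X k) from rfl, he]
  exact Polynomial.prime_X

lemma finsupp_finset_sup_apply {ι α : Type*} (s : Finset ι) (g : ι → (α →₀ ℕ)) (k : α) :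
    (s.sup g) k = s.sup fun j => g j k := by
  classical
  induction s using Finset.cons_induction with
  | empty => rfl
  | cons a s ha ih => simp [Finset.sup_cons, Finsupp.sup_apply, ih]

/-- for a monomial ideal `I` of height at least 2, minimally generated by the
monomials with exponent vectors `f i`, the LCM-dual of the LCM-dual of `I` is `I`.
The LCM-dual has generators with exponent vectors `g i = sup f - f i` (i.e. `lcm(I)/f i`),
and the double dual has generators `sup g - g i`. -/
theorem lcm_dual_dual {n ν : ℕ} {K : Type*} [Field K]
    (f : Fin ν → (Fin n →₀ ℕ))
    (I : Ideal (MvPolynomial (Fin n) K))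
    (hI : I = Ideal.span (Set.range fun i => monomial (f i) (1 : K)))
    (hmin : ∀ i j, f i ≤ f j → i = j)
    (hht : 2 ≤ idealHeight I) :
    Ideal.span (Set.range fun i =>
        monomial ((Finset.univ.sup fun j => Finset.univ.sup f - f j)
          - (Finset.univ.sup f - f i)) (1 : K)) = I := by
  classical
  rcases Nat.eq_zero_or_pos ν with h0 | hν
  · subst h0
    rw [hI]
    congr 1
    rw [Set.range_eq_empty, Set.range_eq_empty]
  -- Key step: every variable has some generator with zero exponent, otherwise
  -- `I ⊆ (X k)` which would force `height I ≤ 1`.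
  have key : ∀ k : Fin n, ∃ j : Fin ν, f j k = 0 := by
    intro k
    by_contra hc
    push_neg at hc
    have hprime : Prime (X k : MvPolynomial (Fin n) K) := mv_prime_X_s1 k
    have hsub : I ≤ Ideal.span {(X k : MvPolynomial (Fin n) K)} := by
      rw [hI, Ideal.span_le]
      rintro _ ⟨i, rfl⟩
      rw [SetLike.mem_coe, Ideal.mem_span_singleton]
      exact X_dvd_monomial.mpr (Or.inr (hc i))
    set P : PrimeSpectrum (MvPolynomial (Fin n) K) :=
      ⟨Ideal.span {X k}, (Ideal.span_singleton_prime hprime.ne_zero).mpr hprime⟩ with hP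
    have hle : idealHeight I ≤ Order.height P :=
      iInf_le_of_le P (iInf_le _ hsub)
    have h2 : (2 : ℕ) ≤ Order.height P := by
      exact_mod_cast le_trans hht hle
    obtain ⟨p, hplast, hplen⟩ := Order.exists_series_of_le_height P h2
    have h01 : p ⟨0, by omega⟩ < p ⟨1, by omega⟩ := p.strictMono (by simp [Fin.lt_def])
    have h12 : p ⟨1, by omega⟩ < P := by
      rw [← hplast]
      exact p.strictMono (by rw [Fin.lt_def]; simp [Fin.last]; omega)
    set Q := p ⟨1, by omega⟩ with hQ
    -- Q is a nonzero prime strictly contained in (X k)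
    have hQne : Q.asIdeal ≠ ⊥ := by
      intro hbot
      exact absurd ((PrimeSpectrum.asIdeal_le_asIdeal Q _).mp (hbot ▸ bot_le))
        (not_le_of_gt h01)
    obtain ⟨a, haQ, hane⟩ := Submodule.exists_mem_ne_zero_of_ne_bot hQne
    have haU : ¬IsUnit a := fun hu => Q.isPrime.ne_top (Q.asIdeal.eq_top_of_isUnit_mem haQ hu)
    -- pick a prime factor of a lying in Q
    have hprod : (UniqueFactorizationMonoid.factors a).prod ∈ Q.asIdeal := by
      obtain ⟨u, hu⟩ := (UniqueFactorizationMonoid.factors_prod hane).symm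
      rw [← hu]
      exact Q.asIdeal.mul_mem_right _ haQ
    obtain ⟨π, hπf, hπQ⟩ := (Q.isPrime.multiset_prod_mem_iff_exists_mem _).mp hprod
    have hπp : Prime π := UniqueFactorizationMonoid.prime_of_factor _ hπf
    have hQP : Q.asIdeal ≤ Ideal.span {(X k : MvPolynomial (Fin n) K)} := by
      have := le_of_lt h12
      rw [← PrimeSpectrum.asIdeal_le_asIdeal] at this
      exact this
    have hdvd : (X k : MvPolynomial (Fin n) K) ∣ π :=
      Ideal.mem_span_singleton.mp (hQP hπQ)
    obtain ⟨c, hc'⟩ := hdvd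
    have hcu : IsUnit c := by
      rcases hπp.irreducible.isUnit_or_isUnit hc' with h | h
      · exact absurd h hprime.not_unit
      · exact h
    have hXQ : (X k : MvPolynomial (Fin n) K) ∈ Q.asIdeal := by
      obtain ⟨u, hu⟩ := hcu
      have : (X k : MvPolynomial (Fin n) K) = π * ((u⁻¹ : _ˣ) : MvPolynomial (Fin n) K) := by
        rw [hc', ← hu, mul_assoc]
        simp
      rw [this]
      exact Q.asIdeal.mul_mem_right _ hπQ
    have : Ideal.span {(X k : MvPolynomial (Fin n) K)} ≤ Q.asIdeal := by
      rw [Ideal.span_le, Set.singleton_subset_iff]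
      exact hXQ
    have hQlt : Q.asIdeal < P.asIdeal := by
      rw [lt_iff_le_not_ge]
      constructor
      · exact hQP
      · intro hPQ
        exact absurd (le_antisymm ((PrimeSpectrum.asIdeal_le_asIdeal _ _).mp hQP)
          ((PrimeSpectrum.asIdeal_le_asIdeal _ _).mp hPQ)) (ne_of_lt h12)
    exact absurd this (not_le_of_gt hQlt)
  -- the exponent computation
  have hexp : ∀ i, (Finset.univ.sup fun j => Finset.univ.sup f - f j)
      - (Finset.univ.sup f - f i) = f i := by
    intro i
    ext k
    rw [Finsupp.tsub_apply, Finsupp.tsub_apply, finsupp_finset_sup_apply]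
    have hM : ∀ j : Fin ν, (Finset.univ.sup f - f j) k
        = (Finset.univ.sup f) k - f j k := fun j => Finsupp.tsub_apply _ _ _
    simp only [hM]
    set m := (Finset.univ.sup f) k with hm
    have hsup : (Finset.univ.sup fun j => m - f j k) = m := by
      apply le_antisymm
      · exact Finset.sup_le fun j _ => tsub_le_self
      · obtain ⟨j0, hj0⟩ := key k
        have := Finset.le_sup (f := fun j => m - f j k) (Finset.mem_univ j0)
        simpa [hj0] using this
    have hfi : f i k ≤ m := by
      rw [hm, finsupp_finset_sup_apply]
      exact Finset.le_sup (f := fun j => (f j) k) (Finset.mem_univ i)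
    rw [hsup, Nat.sub_sub_self hfi]
  have : (fun i => monomial ((Finset.univ.sup fun j => Finset.univ.sup f - f j)
      - (Finset.univ.sup f - f i)) (1 : K)) = fun i => monomial (f i) (1 : K) := by
    funext i
    rw [hexp i]
  rw [this, ← hI]
end

section
/- There exists a monomial ideal I of height 1 whose double LCM-dual is strictly larger than I: for I = (x_1^2, x_1x_2, x_1x_3) in K[x_1,x_2,x_3], one has Î = (x_2x_3, x_1x_3, x_1x_2) and the double LCM-dual equals (x_1,x_2,x_3) ≠ I. -/
/-!
Every generator of `I = (x₁², x₁x₂, x₁x₃)` is divisible by `x₁`, so `I ⊆ (x₁)`, which has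
height 1. The least common multiple is `x₁²x₂x₃`, so `Î = (x₂x₃, x₁x₃, x₁x₂)`; its least common
multiple is `x₁x₂x₃`, and dualising again gives `(x₁, x₂, x₃)`. This contains `I`, and also
`x₂ ∉ (x₁) ⊇ I`. (Variables are indexed from 0 in the code: `xᵢ₊₁` is `X i`.)
-/

open MvPolynomial Finsupp

namespace MvPolynomial

variable {ι σ : Type*} (R : Type*) [CommSemiring R]

noncomputable def monomialIdeal (e : ι → σ →₀ ℕ) : Ideal (MvPolynomial σ R) :=
  Ideal.span (Set.range fun i => monomial (e i) 1)

/-- Exponent vectors of the LCM-dual: the lcm of monomials is the supremum of their exponents,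
and dividing monomials subtracts exponents. -/
noncomputable def lcmDual [Fintype ι] (e : ι → σ →₀ ℕ) (i : ι) : σ →₀ ℕ :=
  Finset.univ.sup e - e i

variable {R}

theorem monomialIdeal_fin_three (a b c : σ →₀ ℕ) :
    monomialIdeal R ![a, b, c] = Ideal.span {monomial a 1, monomial b 1, monomial c 1} := by
  simp [monomialIdeal, Fin.range_fin_succ, Fin.tail]

theorem monomialIdeal_le_span_X {e : ι → σ →₀ ℕ} {j : σ} (h : ∀ i, e i j ≠ 0) :
    monomialIdeal R e ≤ Ideal.span {X j} := by
  rw [monomialIdeal, Ideal.span_le, Set.range_subset_iff]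
  exact fun i => Ideal.mem_span_singleton.mpr (X_dvd_monomial.mpr (Or.inr (h i)))

theorem X_notMem_span_X [Nontrivial R] {i j : σ} (hij : i ≠ j) :
    X i ∉ Ideal.span {(X j : MvPolynomial σ R)} := by
  rw [Ideal.mem_span_singleton, X_dvd_X]
  exact hij.symm

end MvPolynomial

theorem lcmDual_x₁sq_x₁x₂_x₁x₃ :
    lcmDual ![single (0 : Fin 3) 2, single 0 1 + single 1 1, single 0 1 + single 2 1] =
      ![single 1 1 + single 2 1, single 0 1 + single 2 1, single 0 1 + single 1 1] := by
  ext i a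
  fin_cases i <;> fin_cases a <;> simp [lcmDual, Fin.univ_succ, Finsupp.sup_apply]

theorem lcmDual_x₂x₃_x₁x₃_x₁x₂ :
    lcmDual ![single (1 : Fin 3) 1 + single 2 1, single 0 1 + single 2 1, single 0 1 + single 1 1] =
      ![single 0 1, single 1 1, single 2 1] := by
  ext i a
  fin_cases i <;> fin_cases a <;> simp [lcmDual, Fin.univ_succ, Finsupp.sup_apply]

/-- the height-`1` monomial ideal `I = (x₁², x₁x₂, x₁x₃)` in `K[x₁,x₂,x₃]`
has LCM-dual `Î = (x₂x₃, x₁x₃, x₁x₂)` (obtained dividing `lcm(I) = x₁²x₂x₃` by each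
minimal generator, i.e. subtracting exponent vectors from the sup), and the double
LCM-dual is `(x₁,x₂,x₃)`, which is strictly larger than `I`. -/
theorem double_dual_ne_of_height_one {K : Type*} [Field K]
    (e : Fin 3 → (Fin 3 →₀ ℕ))
    (he : e = ![Finsupp.single 0 2, Finsupp.single 0 1 + Finsupp.single 1 1,
      Finsupp.single 0 1 + Finsupp.single 2 1])
    (I Ihat Ihathat : Ideal (MvPolynomial (Fin 3) K))
    (hI : I = Ideal.span (Set.range fun i => monomial (e i) (1 : K)))
    (hIhat : Ihat = Ideal.span
      (Set.range fun i => monomial (Finset.univ.sup e - e i) (1 : K)))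
    (hIhathat : Ihathat = Ideal.span (Set.range fun i =>
      monomial ((Finset.univ.sup fun j => Finset.univ.sup e - e j)
        - (Finset.univ.sup e - e i)) (1 : K))) :
    Ihat = Ideal.span {X 1 * X 2, X 0 * X 2, X 0 * X 1} ∧
    Ihathat = Ideal.span {X 0, X 1, X 2} ∧
    I < Ihathat := by
  change I = monomialIdeal K e at hI
  change Ihat = monomialIdeal K (lcmDual e) at hIhat
  change Ihathat = monomialIdeal K (lcmDual (lcmDual e)) at hIhathat
  subst he
  rw [lcmDual_x₁sq_x₁x₂_x₁x₃] at hIhat hIhathat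
  rw [lcmDual_x₂x₃_x₁x₃_x₁x₂] at hIhathat
  rw [monomialIdeal_fin_three] at hIhat hIhathat
  simp only [← X_pow_eq_monomial, monomial_single_add, pow_one] at hIhat hIhathat
  have hI_le : I ≤ Ideal.span {X 0} :=
    hI ▸ monomialIdeal_le_span_X fun i => by fin_cases i <;> simp
  have hX₁ : X 1 ∈ Ihathat := hIhathat ▸ Ideal.subset_span (by simp)
  refine ⟨hIhat, hIhathat, lt_of_le_not_ge ?_ fun hle => ?_⟩
  · exact hIhathat ▸ hI_le.trans (Ideal.span_mono (by simp))
  · exact X_notMem_span_X one_ne_zero (hI_le (hle hX₁))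
end

section
/- If I and J are monomial ideals in K[x_1,...,x_n], each generated by monomials of a single common degree (I in degree δ_I and J in degree δ_J), then lcm(IJ) = lcm(I)·lcm(J). -/
open MvPolynomial

lemma finsupp_finset_sup_apply_s3 {n : ℕ} {α : Type*} (s : Finset α)
    (F : α → (Fin n →₀ ℕ)) (i : Fin n) :
    (s.sup F) i = s.sup fun x => F x i :=
  Finset.comp_sup_eq_sup_comp (fun h : Fin n →₀ ℕ => h i)
    (fun _ _ => Finsupp.sup_apply _ _ _) rfl

/-- if `I` and `J` are monomial ideals, with minimal monomial generators of
exponent vectors `f 1,…,f s` (all of degree `δI`) and `g 1,…,g t` (all of degree `δJ`)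
respectively, then `lcm(IJ) = lcm(I)·lcm(J)`.  At the level of exponent vectors the lcm is
the pointwise sup and the product of monomials is the sum, so the claim is
`sup_{j,k} (f j + g k) = sup f + sup g`. -/
theorem lcm_mul {n s t : ℕ} {K : Type*} [Field K]
    (hs : 0 < s) (ht : 0 < t)
    (f : Fin s → (Fin n →₀ ℕ)) (g : Fin t → (Fin n →₀ ℕ))
    (I J : Ideal (MvPolynomial (Fin n) K))
    (hI : I = Ideal.span (Set.range fun i => monomial (f i) (1 : K)))
    (hJ : J = Ideal.span (Set.range fun k => monomial (g k) (1 : K)))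
    (hfmin : ∀ i j, f i ≤ f j → i = j)
    (hgmin : ∀ i j, g i ≤ g j → i = j)
    (δI δJ : ℕ)
    (hfdeg : ∀ i, (f i).sum (fun _ e => e) = δI)
    (hgdeg : ∀ k, (g k).sum (fun _ e => e) = δJ) :
    (Finset.univ.sup fun p : Fin s × Fin t => f p.1 + g p.2)
      = Finset.univ.sup f + Finset.univ.sup g := by
  have : 0 < s * t := Nat.mul_pos hs ht
  ext i
  rw [Finsupp.add_apply, finsupp_finset_sup_apply_s3, finsupp_finset_sup_apply_s3,
    finsupp_finset_sup_apply_s3]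
  simp only [Finsupp.add_apply]
  apply le_antisymm
  · apply Finset.sup_le
    intro p _
    exact Nat.add_le_add (Finset.le_sup (f := fun x => f x i) (Finset.mem_univ p.1))
      (Finset.le_sup (f := fun x => g x i) (Finset.mem_univ p.2))
  · obtain ⟨j, -, hj⟩ := Finset.exists_mem_eq_sup Finset.univ
      (Finset.univ_nonempty_iff.2 (Fin.pos_iff_nonempty.1 hs)) (fun x => f x i)
    obtain ⟨k, -, hk⟩ := Finset.exists_mem_eq_sup Finset.univ
      (Finset.univ_nonempty_iff.2 (Fin.pos_iff_nonempty.1 ht)) (fun x => g x i)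
    rw [hj, hk]
    exact Finset.le_sup (f := fun p : Fin s × Fin t => f p.1 i + g p.2 i)
      (Finset.mem_univ (j, k))
end

section
/- For the ideal I = (x^3, xy, y^2) in K[x,y], which is not generated in a single degree, the LCM-dual does not commute with taking squares: (Î)^2 strictly contains \widehat{I^2}; specifically x^3y^2 lies in (Î)^2 but not in \widehat{I^2}. -/
open MvPolynomial

/-- for `I = (x³, xy, y²) ⊆ K[x,y]` (not generated in a single degree),
the LCM-dual does not commute with squaring: `\widehat{I²} ⊊ (Î)²`, and indeed
`x³y² ∈ (Î)²` but `x³y² ∉ \widehat{I²}`.  Here `e` lists the exponent vectors of the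
minimal generators of `I`, `d` those of `I² = (x⁶, x⁴y, x²y², xy³, y⁴)`, and the
LCM-dual of a monomial ideal with minimal generator exponents `h i` is generated by
the monomials `lcm/h i`, i.e. `monomial (sup h - h i)`. -/
theorem dual_square_ne {K : Type*} [Field K]
    (e : Fin 3 → (Fin 2 →₀ ℕ)) (d : Fin 5 → (Fin 2 →₀ ℕ))
    (he : e = ![Finsupp.single 0 3, Finsupp.single 0 1 + Finsupp.single 1 1,
      Finsupp.single 1 2])
    (hd : d = ![Finsupp.single 0 6, Finsupp.single 0 4 + Finsupp.single 1 1,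
      Finsupp.single 0 2 + Finsupp.single 1 2, Finsupp.single 0 1 + Finsupp.single 1 3,
      Finsupp.single 1 4])
    (I Ihat dualIsq : Ideal (MvPolynomial (Fin 2) K))
    (hI : I = Ideal.span (Set.range fun i => monomial (e i) (1 : K)))
    (hIsq : I ^ 2 = Ideal.span (Set.range fun i => monomial (d i) (1 : K)))
    (hIhat : Ihat = Ideal.span
      (Set.range fun i => monomial (Finset.univ.sup e - e i) (1 : K)))
    (hdual : dualIsq = Ideal.span
      (Set.range fun i => monomial (Finset.univ.sup d - d i) (1 : K))) :
    dualIsq < Ihat ^ 2 ∧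
    (X 0 ^ 3 * X 1 ^ 2 : MvPolynomial (Fin 2) K) ∈ Ihat ^ 2 ∧
    (X 0 ^ 3 * X 1 ^ 2 : MvPolynomial (Fin 2) K) ∉ dualIsq := by
  have hse : Finset.univ.sup e = Finsupp.single 0 3 + Finsupp.single 1 2 := by
    have h3 : (Finset.univ : Finset (Fin 3)) = {0, 1, 2} := by decide
    rw [h3]; ext j; fin_cases j <;> simp [he, Finsupp.sup_apply, Finsupp.single_apply]
  have hsd : Finset.univ.sup d = Finsupp.single 0 6 + Finsupp.single 1 4 := by
    have h5 : (Finset.univ : Finset (Fin 5)) = {0, 1, 2, 3, 4} := by decide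
    rw [h5]; ext j; fin_cases j <;> simp [hd, Finsupp.sup_apply, Finsupp.single_apply]
  have hge : ∀ i : Fin 3, Finset.univ.sup e - e i =
      ![Finsupp.single 1 2, Finsupp.single 0 2 + Finsupp.single 1 1,
        Finsupp.single 0 3] i := by
    intro i; rw [hse]; fin_cases i <;>
      (ext j; fin_cases j <;> simp [he, Finsupp.tsub_apply, Finsupp.single_apply])
  have hgd : ∀ i : Fin 5, Finset.univ.sup d - d i =
      ![Finsupp.single 1 4, Finsupp.single 0 2 + Finsupp.single 1 3,
        Finsupp.single 0 4 + Finsupp.single 1 2, Finsupp.single 0 5 + Finsupp.single 1 1,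
        Finsupp.single 0 6] i := by
    intro i; rw [hsd]; fin_cases i <;>
      (ext j; fin_cases j <;> simp [hd, Finsupp.tsub_apply, Finsupp.single_apply])
  have hmem : ∀ i : Fin 3, (monomial (Finset.univ.sup e - e i) (1 : K)) ∈ Ihat := by
    intro i; rw [hIhat]; exact Ideal.subset_span ⟨i, rfl⟩
  have hprod : ∀ i j : Fin 3,
      (monomial ((Finset.univ.sup e - e i) + (Finset.univ.sup e - e j)) (1 : K)) ∈ Ihat ^ 2 := by
    intro i j
    rw [sq]
    have h : (monomial ((Finset.univ.sup e - e i) + (Finset.univ.sup e - e j)) (1 : K)) =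
        monomial (Finset.univ.sup e - e i) (1 : K) * monomial (Finset.univ.sup e - e j) (1 : K) := by
      rw [monomial_mul, one_mul]
    rw [h]
    exact Ideal.mul_mem_mul (hmem i) (hmem j)
  have hx : (X 0 ^ 3 * X 1 ^ 2 : MvPolynomial (Fin 2) K) =
      monomial (Finsupp.single 0 3 + Finsupp.single 1 2) 1 := by
    rw [X_pow_eq_monomial, X_pow_eq_monomial, monomial_mul, one_mul]
  have hmem2 : (X 0 ^ 3 * X 1 ^ 2 : MvPolynomial (Fin 2) K) ∈ Ihat ^ 2 := by
    have h := hprod 0 2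
    rw [hge 0, hge 2] at h
    simp only [Matrix.cons_val_zero, Matrix.cons_val_two, Matrix.tail_cons, Matrix.head_cons] at h
    rw [hx, add_comm]
    exact h
  have hnot : (X 0 ^ 3 * X 1 ^ 2 : MvPolynomial (Fin 2) K) ∉ dualIsq := by
    classical
    rw [hdual]
    have himg : (Set.range fun i => monomial (Finset.univ.sup d - d i) (1 : K)) =
        (fun s => monomial s (1 : K)) '' Set.range (fun i => Finset.univ.sup d - d i) := by
      rw [← Set.range_comp]; rfl
    rw [himg, hx, mem_ideal_span_monomial_image]
    push_neg
    refine ⟨Finsupp.single 0 3 + Finsupp.single 1 2, ?_, ?_⟩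
    · rw [support_monomial]; simp
    · rintro _ ⟨i, rfl⟩
      dsimp only
      rw [hgd i]
      fin_cases i <;>
        · intro hle
          have h0 := Finsupp.le_def.mp hle 0
          have h1 := Finsupp.le_def.mp hle 1
          simp [Finsupp.single_apply] at h0 h1
  have hle : dualIsq ≤ Ihat ^ 2 := by
    rw [hdual, Ideal.span_le]
    rintro _ ⟨i, rfl⟩
    dsimp only
    rw [hgd i]
    fin_cases i
    · have h := hprod 0 0; rw [hge 0] at h
      have hx2 : Finsupp.single 1 2 + Finsupp.single 1 2 = (Finsupp.single 1 4 : Fin 2 →₀ ℕ) := by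
        ext j; fin_cases j <;> simp [Finsupp.single_apply]
      simp only [Matrix.cons_val_zero] at h
      rw [hx2] at h; simpa using h
    · have h := hprod 1 0; rw [hge 1, hge 0] at h
      have hx2 : (Finsupp.single 0 2 + Finsupp.single 1 1) + Finsupp.single 1 2 =
          (Finsupp.single 0 2 + Finsupp.single 1 3 : Fin 2 →₀ ℕ) := by
        ext j; fin_cases j <;> simp [Finsupp.single_apply]
      simp only [Matrix.cons_val_zero, Matrix.cons_val_one, Matrix.head_cons] at h
      rw [hx2] at h; simpa using h
    · have h := hprod 1 1; rw [hge 1] at h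
      have hx2 : (Finsupp.single 0 2 + Finsupp.single 1 1) + (Finsupp.single 0 2 + Finsupp.single 1 1) =
          (Finsupp.single 0 4 + Finsupp.single 1 2 : Fin 2 →₀ ℕ) := by
        ext j; fin_cases j <;> simp [Finsupp.single_apply]
      simp only [Matrix.cons_val_one, Matrix.head_cons, Matrix.cons_val_zero] at h
      rw [hx2] at h; simpa using h
    · have h := hprod 2 1; rw [hge 2, hge 1] at h
      have hx2 : Finsupp.single 0 3 + (Finsupp.single 0 2 + Finsupp.single 1 1) =
          (Finsupp.single 0 5 + Finsupp.single 1 1 : Fin 2 →₀ ℕ) := by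
        ext j; fin_cases j <;> simp [Finsupp.single_apply]
      simp only [Matrix.cons_val_two, Matrix.tail_cons, Matrix.head_cons, Matrix.cons_val_one, Matrix.cons_val_zero] at h
      rw [hx2] at h; simpa using h
    · have h := hprod 2 2; rw [hge 2] at h
      have hx2 : Finsupp.single 0 3 + Finsupp.single 0 3 = (Finsupp.single 0 6 : Fin 2 →₀ ℕ) := by
        ext j; fin_cases j <;> simp [Finsupp.single_apply]
      simp only [Matrix.cons_val_two, Matrix.tail_cons, Matrix.head_cons] at h
      rw [hx2] at h; simpa using h
  exact ⟨lt_of_le_of_ne hle (fun h => hnot (h ▸ hmem2)), hmem2, hnot⟩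
end

section
/- Let I be a monomial ideal in K[x_1,...,x_n] generated in a single degree with height(I) ≥ 2. Then the toric rings (special fiber rings) K[f_1 t,...,f_ν t] and K[\hat{f}_1 t,...,\hat{f}_ν t] are isomorphic as K-algebras, where f_1,...,f_ν are the minimal monomial generators of I and \hat{f}_i = m_I/f_i. -/
open MvPolynomial

namespace SpecialFiberAux

variable (n : ℕ) (K : Type*) [Field K]

/-- The exponent monoid. -/
abbrev Gm (n : ℕ) := (Fin n →₀ ℕ) × ℕ

/-- The multiplicative embedding of the exponent monoid into `K[x][t]`. -/
noncomputable def eHom : Multiplicative (Gm n) →* Polynomial (MvPolynomial (Fin n) K) where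
  toFun x := Polynomial.C (monomial (Multiplicative.toAdd x).1 (1 : K)) *
      Polynomial.X ^ (Multiplicative.toAdd x).2
  map_one' := by
    simp [monomial_zero']
  map_mul' x y := by
    simp only [toAdd_mul, Prod.fst_add, Prod.snd_add, pow_add]
    rw [show (monomial ((Multiplicative.toAdd x).1 + (Multiplicative.toAdd y).1) (1 : K)) =
      monomial (Multiplicative.toAdd x).1 (1 : K) * monomial (Multiplicative.toAdd y).1 (1 : K) by
        rw [monomial_mul, one_mul], map_mul]
    ring

lemma eHom_apply (x : Gm n) :
    eHom n K (Multiplicative.ofAdd x) =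
      Polynomial.C (monomial x.1 (1 : K)) * Polynomial.X ^ x.2 := rfl

/-- Exponent vectors, embedded into `Option (Fin n) →₀ ℕ`. -/
noncomputable def iota : Gm n → (Option (Fin n) →₀ ℕ) :=
  fun x => Finsupp.mapDomain some x.1 + Finsupp.single none x.2

lemma iota_injective : Function.Injective (iota n) := by
  intro a b h
  have h2 : a.2 = b.2 := by
    have := DFunLike.congr_fun h none
    simpa [iota, Finsupp.mapDomain_notin_range] using this
  have h1 : a.1 = b.1 := by
    ext i
    have := DFunLike.congr_fun h (some i)
    simpa [iota, Finsupp.mapDomain_apply (Option.some_injective _)] using this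
  exact Prod.ext h1 h2

lemma optionEquivLeft_monomial (x : Gm n) :
    optionEquivLeft K (Fin n) (monomial (iota n x) (1 : K)) =
      eHom n K (Multiplicative.ofAdd x) := by
  rw [optionEquivLeft_apply, aeval_monomial, map_one, one_mul, iota]
  rw [Finsupp.prod_add_index (by intro a _; exact pow_zero _)
    (by intro a _ p q; exact pow_add _ _ _)]
  rw [Finsupp.prod_mapDomain_index (by intro a; exact pow_zero _)
    (by intro a p q; exact pow_add _ _ _)]
  rw [Finsupp.prod_single_index
    (h := fun i k => (Option.elim i Polynomial.X fun s => Polynomial.C (X s)) ^ k) (pow_zero _)]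
  simp only [Option.elim]
  have : (x.1.prod fun i k => (Polynomial.C (X i : MvPolynomial (Fin n) K)) ^ k) =
      Polynomial.C (monomial x.1 (1 : K)) := by
    rw [monomial_eq, map_one, one_mul, Finsupp.prod, Finsupp.prod, map_prod]
    simp
  rw [this, eHom_apply]

set_option maxHeartbeats 1000000 in
lemma eHom_linearIndependent :
    LinearIndependent K (fun x : Gm n => eHom n K (Multiplicative.ofAdd x)) := by
  have h1 : LinearIndependent K (fun x : Gm n =>
      (monomial (iota n x) (1 : K) : MvPolynomial (Option (Fin n)) K)) := by
    have h0 := (MvPolynomial.basisMonomials (Option (Fin n)) K).linearIndependent.comp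
      (iota n) (iota_injective n)
    have he : (⇑(MvPolynomial.basisMonomials (Option (Fin n)) K) ∘ iota n) =
        fun x => (monomial (iota n x) (1 : K) : MvPolynomial (Option (Fin n)) K) := by
      funext x
      rw [Function.comp_apply, coe_basisMonomials]
    rwa [he] at h0
  have h2 := h1.map' (optionEquivLeft K (Fin n)).toLinearEquiv.toLinearMap
    (LinearEquiv.ker _)
  have he2 : ((optionEquivLeft K (Fin n)).toLinearEquiv.toLinearMap ∘ fun x : Gm n =>
      (monomial (iota n x) (1 : K) : MvPolynomial (Option (Fin n)) K)) =
      fun x : Gm n => eHom n K (Multiplicative.ofAdd x) := by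
    funext x
    exact optionEquivLeft_monomial n K x
  rwa [he2] at h2

/-- The algebra map from the monoid algebra of a submonoid of exponents. -/
noncomputable def psi (S : AddSubmonoid (Gm n)) :
    AddMonoidAlgebra K S →ₐ[K] Polynomial (MvPolynomial (Fin n) K) :=
  AddMonoidAlgebra.lift K _ S ((eHom n K).comp (AddMonoidHom.toMultiplicative S.subtype))

lemma psi_eq (S : AddSubmonoid (Gm n)) :
    ⇑(psi n K S) = fun x => (Finsupp.linearCombination K
      (fun a : S => eHom n K (Multiplicative.ofAdd (a : Gm n)))) x.coeff := by
  funext x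
  rw [psi, AddMonoidAlgebra.lift_apply, Finsupp.linearCombination_apply]
  rfl

lemma psi_injective (S : AddSubmonoid (Gm n)) : Function.Injective (psi n K S) := by
  have li : LinearIndependent K (fun a : S => eHom n K (Multiplicative.ofAdd (a : Gm n))) :=
    (eHom_linearIndependent n K).comp _ Subtype.val_injective
  rw [psi_eq]
  exact fun a b h => AddMonoidAlgebra.coeff_injective
    (linearIndependent_iff_injective_finsuppLinearCombination.mp li h)

lemma psi_single (S : AddSubmonoid (Gm n)) (a : S) (b : K) :
    psi n K S (AddMonoidAlgebra.single a b) =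
      b • eHom n K (Multiplicative.ofAdd (a : Gm n)) := by
  rw [psi, AddMonoidAlgebra.lift_single]; rfl

lemma eHom_mem_adjoin (T : Set (Gm n)) :
    ∀ a ∈ AddSubmonoid.closure T,
      eHom n K (Multiplicative.ofAdd a) ∈
        Algebra.adjoin K ((fun x => eHom n K (Multiplicative.ofAdd x)) '' T) := by
  intro a ha
  induction ha using AddSubmonoid.closure_induction with
  | mem y hy => exact Algebra.subset_adjoin ⟨y, hy, rfl⟩
  | zero =>
    have : eHom n K (Multiplicative.ofAdd (0 : Gm n)) = 1 := map_one _
    rw [this]; exact Subalgebra.one_mem _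
  | add y z _ _ ihy ihz =>
    have : eHom n K (Multiplicative.ofAdd (y + z)) =
        eHom n K (Multiplicative.ofAdd y) * eHom n K (Multiplicative.ofAdd z) := map_mul _ _ _
    rw [this]; exact Subalgebra.mul_mem _ ihy ihz

lemma psi_range (T : Set (Gm n)) :
    (psi n K (AddSubmonoid.closure T)).range =
      Algebra.adjoin K ((fun x => eHom n K (Multiplicative.ofAdd x)) '' T) := by
  apply le_antisymm
  · rintro _ ⟨x, rfl⟩
    induction x using AddMonoidAlgebra.induction with
    | zero =>
      show psi n K (AddSubmonoid.closure T) 0 ∈ _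
      rw [map_zero]
      exact Subalgebra.zero_mem _
    | single_add a b g _ _ ih =>
      show psi n K (AddSubmonoid.closure T) (AddMonoidAlgebra.single a b + g) ∈ _
      rw [map_add, psi_single]
      exact Subalgebra.add_mem _
        (Subalgebra.smul_mem _ (eHom_mem_adjoin n K T a.val a.2) b) ih
  · rw [Algebra.adjoin_le_iff]
    rintro _ ⟨t, ht, rfl⟩
    refine ⟨AddMonoidAlgebra.single ⟨t, AddSubmonoid.subset_closure ht⟩ 1, ?_⟩
    show psi n K (AddSubmonoid.closure T) _ = _
    rw [psi_single, one_smul]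

end SpecialFiberAux

open SpecialFiberAux in
/-- let `I` be a monomial ideal of `K[x₁,…,xₙ]` generated in a single degree
with `height I ≥ 2`, minimally generated by the monomials with exponent vectors `f i`.
Then the special fiber rings `K[f₁t,…,f_ν t]` and `K[f̂₁t,…,f̂_ν t]` (subalgebras of
`R[t]`), where `f̂ i = lcm(I)/f i` has exponent vector `sup f - f i`, are isomorphic as
`K`-algebras. -/
theorem special_fiber_iso {n ν : ℕ} {K : Type*} [Field K] (hν : 0 < ν)
    (f : Fin ν → (Fin n →₀ ℕ))
    (I : Ideal (MvPolynomial (Fin n) K))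
    (hI : I = Ideal.span (Set.range fun i => monomial (f i) (1 : K)))
    (hmin : ∀ i j, f i ≤ f j → i = j)
    (δ : ℕ) (hdeg : ∀ i, (f i).sum (fun _ e => e) = δ)
    (hht : 2 ≤ idealHeight I) :
    Nonempty
      ((Algebra.adjoin K (Set.range fun i =>
          (Polynomial.C (monomial (f i) (1 : K)) * Polynomial.X :
            Polynomial (MvPolynomial (Fin n) K)))) ≃ₐ[K]
       (Algebra.adjoin K (Set.range fun i =>
          (Polynomial.C (monomial (Finset.univ.sup f - f i) (1 : K)) * Polynomial.X :
            Polynomial (MvPolynomial (Fin n) K))))) := by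
  classical
  set m : Fin n →₀ ℕ := Finset.univ.sup f with hm
  set T1 : Set (Gm n) := Set.range (fun i => (f i, (1 : ℕ))) with hT1
  set T2 : Set (Gm n) := Set.range (fun i => (m - f i, (1 : ℕ))) with hT2
  set M1 := AddSubmonoid.closure T1 with hM1
  set M2 := AddSubmonoid.closure T2 with hM2
  have hfm : ∀ i, f i ≤ m := fun i => Finset.le_sup (Finset.mem_univ i)
  -- key closure lemma
  have key : ∀ (T T' : Set (Gm n)),
      (∀ x ∈ T, x.1 ≤ x.2 • m ∧ ((x.2 • m - x.1, x.2) : Gm n) ∈ T') →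
      ∀ x ∈ AddSubmonoid.closure T,
        x.1 ≤ x.2 • m ∧ ((x.2 • m - x.1, x.2) : Gm n) ∈ AddSubmonoid.closure T' := by
    intro T T' hT x hx
    induction hx using AddSubmonoid.closure_induction with
    | mem y hy => exact ⟨(hT y hy).1, AddSubmonoid.subset_closure (hT y hy).2⟩
    | zero =>
      refine ⟨by simp, ?_⟩
      have h0 : (((0 : Gm n).2 • m - (0 : Gm n).1, (0 : Gm n).2) : Gm n) = 0 := by simp
      rw [h0]
      exact AddSubmonoid.zero_mem _
    | add a b _ _ iha ihb =>
      have hle : (a + b).1 ≤ (a + b).2 • m := by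
        have h : (a + b).2 • m = a.2 • m + b.2 • m := add_smul _ _ _
        rw [h]
        exact add_le_add iha.1 ihb.1
      refine ⟨hle, ?_⟩
      have heq : (((a + b).2 • m - (a + b).1, (a + b).2) : Gm n) =
          ((a.2 • m - a.1, a.2) : Gm n) + ((b.2 • m - b.1, b.2) : Gm n) := by
        refine Prod.ext ?_ rfl
        show (a.2 + b.2) • m - (a.1 + b.1) = (a.2 • m - a.1) + (b.2 • m - b.1)
        rw [add_smul, tsub_add_tsub_comm iha.1 ihb.1]
      rw [heq]
      exact AddSubmonoid.add_mem _ iha.2 ihb.2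
  have hgen1 : ∀ x ∈ T1, x.1 ≤ x.2 • m ∧ ((x.2 • m - x.1, x.2) : Gm n) ∈ T2 := by
    rintro _ ⟨i, rfl⟩
    constructor
    · simpa using hfm i
    · exact ⟨i, by simp⟩
  have hgen2 : ∀ x ∈ T2, x.1 ≤ x.2 • m ∧ ((x.2 • m - x.1, x.2) : Gm n) ∈ T1 := by
    rintro _ ⟨i, rfl⟩
    constructor
    · simpa using tsub_le_self
    · exact ⟨i, by simp [tsub_tsub_cancel_of_le (hfm i)]⟩
  have h1 := key T1 T2 hgen1
  have h2 := key T2 T1 hgen2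
  -- the additive monoid equivalence
  let φ : M1 ≃+ M2 :=
    { toFun := fun x => ⟨(x.val.2 • m - x.val.1, x.val.2), (h1 x.val x.2).2⟩
      invFun := fun x => ⟨(x.val.2 • m - x.val.1, x.val.2), (h2 x.val x.2).2⟩
      left_inv := by
        intro x
        refine Subtype.ext (Prod.ext ?_ rfl)
        exact tsub_tsub_cancel_of_le (h1 x.val x.2).1
      right_inv := by
        intro x
        refine Subtype.ext (Prod.ext ?_ rfl)
        exact tsub_tsub_cancel_of_le (h2 x.val x.2).1
      map_add' := by
        intro a b
        refine Subtype.ext (Prod.ext ?_ rfl)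
        show ((a : Gm n) + b).2 • m - ((a : Gm n) + b).1 =
          ((a : Gm n).2 • m - (a : Gm n).1) + ((b : Gm n).2 • m - (b : Gm n).1)
        show ((a : Gm n).2 + (b : Gm n).2) • m - ((a : Gm n).1 + (b : Gm n).1) = _
        rw [add_smul, tsub_add_tsub_comm (h1 a.val a.2).1 (h1 b.val b.2).1] }
  have genset1 : ((fun x => eHom n K (Multiplicative.ofAdd x)) '' T1) =
      (Set.range fun i => (Polynomial.C (monomial (f i) (1 : K)) * Polynomial.X :
        Polynomial (MvPolynomial (Fin n) K))) := by
    rw [hT1, ← Set.range_comp]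
    exact congrArg Set.range (funext fun i => by rw [Function.comp_apply, eHom_apply, pow_one])
  have genset2 : ((fun x => eHom n K (Multiplicative.ofAdd x)) '' T2) =
      (Set.range fun i => (Polynomial.C (monomial (m - f i) (1 : K)) * Polynomial.X :
        Polynomial (MvPolynomial (Fin n) K))) := by
    rw [hT2, ← Set.range_comp]
    exact congrArg Set.range (funext fun i => by rw [Function.comp_apply, eHom_apply, pow_one])
  have e1 : AddMonoidAlgebra K M1 ≃ₐ[K] Algebra.adjoin K
      (Set.range fun i => (Polynomial.C (monomial (f i) (1 : K)) * Polynomial.X :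
        Polynomial (MvPolynomial (Fin n) K))) :=
    (AlgEquiv.ofInjective _ (psi_injective n K M1)).trans
      (Subalgebra.equivOfEq _ _ (by rw [hM1, psi_range, genset1]))
  have e2 : AddMonoidAlgebra K M2 ≃ₐ[K] Algebra.adjoin K
      (Set.range fun i => (Polynomial.C (monomial (m - f i) (1 : K)) * Polynomial.X :
        Polynomial (MvPolynomial (Fin n) K))) :=
    (AlgEquiv.ofInjective _ (psi_injective n K M2)).trans
      (Subalgebra.equivOfEq _ _ (by rw [hM2, psi_range, genset2]))
  exact ⟨e1.symm.trans ((AddMonoidAlgebra.domCongr K K φ).trans e2)⟩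
end

section
/- Let λ = (λ_1,...,λ_m) be a partition with λ_1 = n, and let I_λ ⊆ K[x_1,...,x_m,y_1,...,y_n] be the Ferrers ideal generated by all x_i y_j with 1 ≤ j ≤ λ_i. Then the LCM-dual of I_λ has the irredundant primary decomposition \widehat{I_λ} = ⋂_{i<j}(x_i,x_j) ∩ ⋂_{i<j}(y_i,y_j) ∩ ⋂_{x_i y_j ∉ I_λ}(x_i,y_j). -/
/-! Both sides are monomial ideals, so everything is decided exponent by exponent, through the
zero set `Z = {w | d w = 0}` of an exponent `d`. The dual generator `x^(𝟙 - e_u - e_v)` divides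
`x^d` iff `Z ⊆ {u, v}`, while `x^d ∈ (x_u, x_v)` iff `Z` does not contain both `u` and `v`.
So `x^d` lies in the dual iff `Z` contains at most one `x`, at most one `y`, and `x_i y_j ∈ I_λ`
whenever `x_i, y_j ∈ Z`, which is membership in the intersection; the full first row and first
column of `λ` provide the missing index when `Z` contains no `x` or no `y`.
For irredundancy, the monomial whose exponent vanishes exactly at `u, v` lies in every component
except `(x_u, x_v)`. -/

open MvPolynomial

section PairIdeals

variable {σ R : Type*} [CommSemiring R]

theorem mem_span_X_pair_iff {u v : σ} {f : MvPolynomial σ R} :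
    f ∈ Ideal.span {X u, X v} ↔ ∀ d ∈ f.support, d u ≠ 0 ∨ d v ≠ 0 := by
  rw [← Set.image_pair, mem_ideal_span_X_image]
  simp only [Set.mem_insert_iff, Set.mem_singleton_iff, exists_eq_or_imp, exists_eq_left]

theorem monomial_one_mem_span_X_pair_iff [Nontrivial R] {u v : σ} {e : σ →₀ ℕ} :
    monomial e (1 : R) ∈ Ideal.span {X u, X v} ↔ e u ≠ 0 ∨ e v ≠ 0 := by
  classical
  simp [mem_span_X_pair_iff, support_monomial]

variable (R) in
def pairIdeals (r : σ → σ → Prop) : Set (Ideal (MvPolynomial σ R)) :=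
  {P | ∃ u v, r u v ∧ P = Ideal.span {X u, X v}}

theorem mem_sInf_pairIdeals_iff {r : σ → σ → Prop} {f : MvPolynomial σ R} :
    f ∈ sInf (pairIdeals R r) ↔ ∀ d ∈ f.support, ∀ u v, r u v → d u ≠ 0 ∨ d v ≠ 0 := by
  rw [Submodule.mem_sInf]
  constructor
  · intro h d hd u v huv
    exact mem_span_X_pair_iff.1 (h _ ⟨u, v, huv, rfl⟩) d hd
  · rintro h _ ⟨u, v, huv, rfl⟩
    exact mem_span_X_pair_iff.2 fun d hd => h d hd u v huv

theorem sInf_diff_singleton_ne_sInf_pairIdeals [Finite σ] [Nontrivial R] {r : σ → σ → Prop}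
    (hr : ∀ u v, r u v → u ≠ v) {P : Ideal (MvPolynomial σ R)} (hP : P ∈ pairIdeals R r) :
    sInf (pairIdeals R r \ {P}) ≠ sInf (pairIdeals R r) := by
  classical
  obtain ⟨u, v, huv, rfl⟩ := hP
  let e : σ →₀ ℕ := Finsupp.equivFunOnFinite.symm fun w => if w = u ∨ w = v then 0 else 1
  have he : ∀ w, e w = 0 ↔ w = u ∨ w = v := fun w => by
    by_cases w = u <;> simp [e, *]
  have hmem : monomial e (1 : R) ∈ sInf (pairIdeals R r \ {Ideal.span {X u, X v}}) := by
    refine Submodule.mem_sInf.2 ?_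
    rintro _ ⟨⟨a, b, hab, rfl⟩, hne⟩
    rw [monomial_one_mem_span_X_pair_iff, ne_eq, he, ne_eq, he]
    by_contra! ⟨ha, hb⟩
    apply hne
    rcases ha with rfl | rfl <;> rcases hb with rfl | rfl
    · exact absurd rfl (hr _ _ hab)
    · rfl
    · exact Set.mem_singleton_iff.2 (by rw [Set.pair_comm])
    · exact absurd rfl (hr _ _ hab)
  intro heq
  rw [heq] at hmem
  have := sInf_le (show _ ∈ pairIdeals R r from ⟨u, v, huv, rfl⟩) hmem
  simp [monomial_one_mem_span_X_pair_iff, he] at this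

end PairIdeals

theorem tsub_single_single_le_iff {σ : Type*} {A d : σ →₀ ℕ} (hA : ∀ w, A w = 1) (u v : σ) :
    A - Finsupp.single u 1 - Finsupp.single v 1 ≤ d ↔ {w | d w = 0} ⊆ {u, v} := by
  classical
  simp only [Finsupp.le_def, Set.subset_def, Set.mem_ofPred_eq, Set.mem_insert_iff,
    Set.mem_singleton_iff, Finsupp.tsub_apply, hA, Finsupp.single_apply]
  refine forall_congr' fun w => ?_
  split_ifs <;> grind

theorem mem_span_monomial_tsub_single_single_iff {σ ι R : Type*} [CommSemiring R]
    {A : σ →₀ ℕ} (hA : ∀ w, A w = 1) (u v : ι → σ) (s : Set ι) {f : MvPolynomial σ R} :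
    f ∈ Ideal.span
        ((fun p => monomial (A - Finsupp.single (u p) 1 - Finsupp.single (v p) 1) (1 : R)) '' s) ↔
      ∀ d ∈ f.support, ∃ p ∈ s, {w | d w = 0} ⊆ {u p, v p} := by
  rw [← Set.image_image (g := fun e => monomial e (1 : R))
    (f := fun p => A - Finsupp.single (u p) 1 - Finsupp.single (v p) 1),
    mem_ideal_span_monomial_image]
  simp only [Set.exists_mem_image, tsub_single_single_le_iff hA]

theorem subset_inl_inr_pair_iff {α β : Type*} {Z : Set (α ⊕ β)} {a : α} {b : β} :
    Z ⊆ {Sum.inl a, Sum.inr b} ↔ Sum.inl ⁻¹' Z ⊆ {a} ∧ Sum.inr ⁻¹' Z ⊆ {b} := by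
  simp [Set.subset_def, Sum.forall]

theorem exists_subset_inl_inr_pair_iff {α β : Type*} {R : α → β → Prop} {a₀ : α} {b₀ : β}
    (ha₀ : ∀ b, R a₀ b) (hb₀ : ∀ a, R a b₀) (Z : Set (α ⊕ β)) :
    (∃ a b, R a b ∧ Z ⊆ {Sum.inl a, Sum.inr b}) ↔
      (Sum.inl ⁻¹' Z).Subsingleton ∧ (Sum.inr ⁻¹' Z).Subsingleton ∧
        ∀ a b, Sum.inl a ∈ Z → Sum.inr b ∈ Z → R a b := by
  simp only [subset_inl_inr_pair_iff]
  constructor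
  · rintro ⟨a, b, hab, ha, hb⟩
    refine ⟨Set.subsingleton_singleton.anti ha, Set.subsingleton_singleton.anti hb,
      fun a' b' ha' hb' => ?_⟩
    rwa [ha ha', hb hb']
  · rintro ⟨hl, hr, hlr⟩
    rcases hl.eq_empty_or_singleton with hl | ⟨a, hl⟩ <;>
      rcases hr.eq_empty_or_singleton with hr | ⟨b, hr⟩
    · exact ⟨a₀, b₀, ha₀ b₀, hl ▸ Set.empty_subset _, hr ▸ Set.empty_subset _⟩
    · exact ⟨a₀, b, ha₀ b, hl ▸ Set.empty_subset _, hr.subset⟩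
    · exact ⟨a, b₀, hb₀ a, hl.subset, hr ▸ Set.empty_subset _⟩
    · exact ⟨a, b, hlr a b (hl.symm.subset rfl) (hr.symm.subset rfl), hl.subset, hr.subset⟩

theorem Set.subsingleton_iff_forall_lt_notMem_or_notMem {α : Type*} [LinearOrder α]
    {s : Set α} : s.Subsingleton ↔ ∀ i j, i < j → i ∉ s ∨ j ∉ s := by
  refine ⟨fun hs i j hij => ?_, fun h i hi j hj => ?_⟩
  · by_contra! ⟨hi, hj⟩
    exact hij.ne (hs hi hj)
  · by_contra hne
    rcases lt_or_gt_of_ne hne with hlt | hlt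
    · exact (h i j hlt).elim (· hi) (· hj)
    · exact (h j i hlt).elim (· hj) (· hi)

def ferrersDualPair {m n : ℕ} (lam : Fin m → ℕ) : Fin m ⊕ Fin n → Fin m ⊕ Fin n → Prop
  | .inl i, .inl j => i < j
  | .inr i, .inr j => i < j
  | .inl i, .inr j => ¬ (j : ℕ) < lam i
  | .inr _, .inl _ => False

theorem ferrersDualPair.ne {m n : ℕ} {lam : Fin m → ℕ} :
    ∀ {u v : Fin m ⊕ Fin n}, ferrersDualPair lam u v → u ≠ v
  | .inl _, .inl _, h => by simpa [ferrersDualPair] using ne_of_lt h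
  | .inr _, .inr _, h => by simpa [ferrersDualPair] using ne_of_lt h
  | .inl _, .inr _, _ => Sum.inl_ne_inr

theorem exists_ferrers_cell_subset_iff {m n : ℕ} (hm : 0 < m) (lam : Fin m → ℕ)
    (hfirst : lam ⟨0, hm⟩ = n) (hpos : ∀ i, 1 ≤ lam i) (Z : Set (Fin m ⊕ Fin n)) :
    (∃ p ∈ {p : Fin m × Fin n | (p.2 : ℕ) < lam p.1}, Z ⊆ {Sum.inl p.1, Sum.inr p.2}) ↔
      ∀ u v, ferrersDualPair lam u v → u ∉ Z ∨ v ∉ Z := by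
  have hn : 0 < n := hfirst ▸ hpos _
  simp only [Set.mem_ofPred_eq, Prod.exists]
  rw [exists_subset_inl_inr_pair_iff (R := fun i (j : Fin n) => (j : ℕ) < lam i)
    (a₀ := ⟨0, hm⟩) (b₀ := ⟨0, hn⟩) (fun j => hfirst ▸ j.isLt) hpos]
  simp only [Sum.forall, ferrersDualPair, Set.subsingleton_iff_forall_lt_notMem_or_notMem,
    Set.mem_preimage, false_imp_iff, implies_true, and_true, forall_and]
  have hcell : ∀ (a : Fin m) (b : Fin n), (¬ (b : ℕ) < lam a → Sum.inl a ∉ Z ∨ Sum.inr b ∉ Z) ↔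
      (Sum.inl a ∈ Z → Sum.inr b ∈ Z → (b : ℕ) < lam a) := fun a b => by tauto
  simp only [hcell]
  tauto

theorem ferrers_dual_primary_decomposition_general {m n : ℕ} {K : Type*} [Field K]
    (hm : 0 < m)
    (lam : Fin m → ℕ)
    (hfirst : lam ⟨0, hm⟩ = n)
    (hpos : ∀ i, 1 ≤ lam i)
    (A : (Fin m ⊕ Fin n) →₀ ℕ)
    (hA : A = ∑ v : Fin m ⊕ Fin n, Finsupp.single v 1)
    (C : Set (Ideal (MvPolynomial (Fin m ⊕ Fin n) K)))
    (hC : C = {P | (∃ i j : Fin m, i < j ∧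
          P = Ideal.span {X (Sum.inl i), X (Sum.inl j)}) ∨
        (∃ i j : Fin n, i < j ∧
          P = Ideal.span {X (Sum.inr i), X (Sum.inr j)}) ∨
        (∃ (i : Fin m) (j : Fin n), ¬ ((j : ℕ) < lam i) ∧
          P = Ideal.span {X (Sum.inl i), X (Sum.inr j)})}) :
    Ideal.span ((fun p : Fin m × Fin n =>
        monomial (A - Finsupp.single (Sum.inl p.1) 1 - Finsupp.single (Sum.inr p.2) 1)
          (1 : K)) '' {p | (p.2 : ℕ) < lam p.1})
      = sInf C ∧
    ∀ P ∈ C, sInf (C \ {P}) ≠ sInf C := by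
  have hA1 : ∀ w, A w = 1 := fun w => by
    rw [hA, Finsupp.finsetSum_apply]
    classical simp [Finsupp.single_apply]
  obtain rfl : C = pairIdeals K (ferrersDualPair lam) := by
    rw [hC]
    ext P
    simp only [pairIdeals, ferrersDualPair, Sum.exists, exists_or, Set.mem_ofPred_eq,
      false_and, exists_false, or_false]
    exact or_congr_right or_comm
  refine ⟨?_, fun _ => sInf_diff_singleton_ne_sInf_pairIdeals fun _ _ => ferrersDualPair.ne⟩
  ext f
  refine (mem_span_monomial_tsub_single_single_iff (R := K) hA1
    (fun p : Fin m × Fin n => Sum.inl p.1) (fun p => Sum.inr p.2)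
    {p | (p.2 : ℕ) < lam p.1}).trans ?_
  rw [mem_sInf_pairIdeals_iff]
  exact forall₂_congr fun d _ => exists_ferrers_cell_subset_iff hm lam hfirst hpos _

/-- let `λ` be a partition with `λ 0 = n` (using `0`-based indexing of rows
and columns, so the Ferrers ideal `I_λ ⊆ K[x₁,…,x_m,y₁,…,y_n]` is generated by the
monomials `x_i y_j` with `(j : ℕ) < λ i`).  Then the LCM-dual of `I_λ`, generated by the
monomials `lcm(I_λ)/(x_i y_j)` where `lcm(I_λ) = x₁⋯x_m y₁⋯y_n`, has the irredundant
primary decomposition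
`⋂_{i<j} (x_i,x_j) ∩ ⋂_{i<j} (y_i,y_j) ∩ ⋂_{x_i y_j ∉ I_λ} (x_i,y_j)`. -/
theorem ferrers_dual_primary_decomposition {m n : ℕ} {K : Type*} [Field K]
    (hm : 0 < m) (hn : 0 < n)
    (lam : Fin m → ℕ)
    (hanti : ∀ i j : Fin m, i ≤ j → lam j ≤ lam i)
    (hfirst : lam ⟨0, hm⟩ = n)
    (hpos : ∀ i, 1 ≤ lam i)
    (A : (Fin m ⊕ Fin n) →₀ ℕ)
    (hA : A = ∑ v : Fin m ⊕ Fin n, Finsupp.single v 1)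
    (C : Set (Ideal (MvPolynomial (Fin m ⊕ Fin n) K)))
    (hC : C = {P | (∃ i j : Fin m, i < j ∧
          P = Ideal.span {X (Sum.inl i), X (Sum.inl j)}) ∨
        (∃ i j : Fin n, i < j ∧
          P = Ideal.span {X (Sum.inr i), X (Sum.inr j)}) ∨
        (∃ (i : Fin m) (j : Fin n), ¬ ((j : ℕ) < lam i) ∧
          P = Ideal.span {X (Sum.inl i), X (Sum.inr j)})}) :
    Ideal.span ((fun p : Fin m × Fin n =>
        monomial (A - Finsupp.single (Sum.inl p.1) 1 - Finsupp.single (Sum.inr p.2) 1)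
          (1 : K)) '' {p | (p.2 : ℕ) < lam p.1})
      = sInf C ∧
    ∀ P ∈ C, sInf (C \ {P}) ≠ sInf C :=
  ferrers_dual_primary_decomposition_general hm lam hfirst hpos A hA C hC
end

section
/- Let λ = (λ_1,...,λ_m) be a partition with λ_1 = n and I_λ the Ferrers ideal of the Ferrers graph G_λ in K[x_1,...,x_m,y_1,...,y_n]. Then the LCM-dual of I_λ equals the Alexander dual of the edge ideal of the complement graph G_λ^c: \widehat{I_λ} = (I(G_λ^c))^⋆. -/
/-!
A monomial `x^d` lies in `\widehat{I_λ}` iff its zero set `Z(d) = {w | d w = 0}` is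
contained in an edge of `G_λ`, and it lies in `I(G_λᶜ)^⋆` iff `Z(d)` meets no non-edge twice,
i.e. iff `Z(d)` is a clique of `G_λ`. Both ideals are monomial, so it suffices to compare these
conditions. A clique of a bipartite graph has at most one vertex on each side, and since every
vertex of `G_λ` lies on an edge (`x_i y_1` and `x_1 y_j`), every clique extends to an edge.
-/

open MvPolynomial

section Bipartite

variable {α β : Type*}

def bipartiteAdj (r : α → β → Prop) (u v : α ⊕ β) : Prop :=
  ∃ i j, ((u = Sum.inl i ∧ v = Sum.inr j) ∨ (u = Sum.inr j ∧ v = Sum.inl i)) ∧ r i j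

variable {r : α → β → Prop}

@[simp] theorem bipartiteAdj_inl_inr {i : α} {j : β} :
    bipartiteAdj r (Sum.inl i) (Sum.inr j) ↔ r i j := by
  simp [bipartiteAdj]

@[simp] theorem bipartiteAdj_inr_inl {i : α} {j : β} :
    bipartiteAdj r (Sum.inr j) (Sum.inl i) ↔ r i j := by
  simp [bipartiteAdj]

@[simp] theorem not_bipartiteAdj_inl_inl {i i' : α} :
    ¬ bipartiteAdj r (Sum.inl i) (Sum.inl i') := by
  simp [bipartiteAdj]

@[simp] theorem not_bipartiteAdj_inr_inr {j j' : β} :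
    ¬ bipartiteAdj r (Sum.inr j) (Sum.inr j') := by
  simp [bipartiteAdj]

theorem exists_edge_superset_iff_pairwise_bipartiteAdj [Nonempty α]
    (hα : ∀ i, ∃ j, r i j) (hβ : ∀ j, ∃ i, r i j) (Z : Set (α ⊕ β)) :
    (∃ p ∈ {p : α × β | r p.1 p.2}, Z ⊆ {Sum.inl p.1, Sum.inr p.2}) ↔
      Z.Pairwise (bipartiteAdj r) := by
  constructor
  · rintro ⟨⟨i, j⟩, hij, hZ⟩
    exact (Set.pairwise_pair.mpr fun _ => ⟨by simpa using hij, by simpa using hij⟩).mono hZ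
  · intro hZ
    have hl : ∀ {i i'}, Sum.inl i ∈ Z → Sum.inl i' ∈ Z → i = i' := fun hi hi' => by
      by_contra hne
      exact not_bipartiteAdj_inl_inl (hZ hi hi' (by simpa using hne))
    have hr : ∀ {j j'}, Sum.inr j ∈ Z → Sum.inr j' ∈ Z → j = j' := fun hj hj' => by
      by_contra hne
      exact not_bipartiteAdj_inr_inr (hZ hj hj' (by simpa using hne))
    by_cases hy : ∃ j, Sum.inr j ∈ Z
    · obtain ⟨j, hj⟩ := hy
      obtain ⟨i, hij, hi⟩ : ∃ i, r i j ∧ ∀ i', Sum.inl i' ∈ Z → i' = i := by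
        by_cases hx : ∃ i, Sum.inl i ∈ Z
        · obtain ⟨i, hi⟩ := hx
          exact ⟨i, by simpa using hZ hi hj (by simp), fun i' hi' => hl hi' hi⟩
        · obtain ⟨i, hij⟩ := hβ j
          exact ⟨i, hij, fun i' hi' => (hx ⟨i', hi'⟩).elim⟩
      refine ⟨(i, j), hij, ?_⟩
      rintro (i' | j') hw
      · simp [hi i' hw]
      · simp [hr hw hj]
    · obtain ⟨i, hi⟩ : ∃ i, ∀ i', Sum.inl i' ∈ Z → i' = i := by
        by_cases hx : ∃ i, Sum.inl i ∈ Z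
        · obtain ⟨i, hi⟩ := hx
          exact ⟨i, fun i' hi' => hl hi' hi⟩
        · exact ⟨Classical.arbitrary α, fun i' hi' => (hx ⟨i', hi'⟩).elim⟩
      obtain ⟨j, hij⟩ := hα i
      refine ⟨(i, j), hij, ?_⟩
      rintro (i' | j') hw
      · simp [hi i' hw]
      · exact (hy ⟨j', hw⟩).elim

end Bipartite

section MonomialIdeal

variable {σ R : Type*} [CommSemiring R]

theorem sum_single_one_sub_single_sub_single_le_iff [Fintype σ] [DecidableEq σ]
    {u v : σ} {d : σ →₀ ℕ} :
    (∑ w, Finsupp.single w 1) - Finsupp.single u 1 - Finsupp.single v 1 ≤ d ↔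
      {w | d w = 0} ⊆ {u, v} := by
  simp only [Finsupp.le_def, Finsupp.tsub_apply, Finsupp.finsetSum_apply, Finsupp.single_apply]
  refine forall_congr' fun w => ?_
  by_cases hu : u = w <;> by_cases hv : v = w <;> simp [hu, hv, eq_comm, Nat.one_le_iff_ne_zero]

theorem mem_span_monomial_compl_pair_iff [Fintype σ] [DecidableEq σ] {ι : Type*}
    (u v : ι → σ) (S : Set ι) (f : MvPolynomial σ R) :
    f ∈ Ideal.span ((fun p => monomial ((∑ w, Finsupp.single w 1) - Finsupp.single (u p) 1 -
        Finsupp.single (v p) 1) (1 : R)) '' S) ↔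
      ∀ d ∈ f.support, ∃ p ∈ S, {w | d w = 0} ⊆ {u p, v p} := by
  rw [← Set.image_image (fun s => monomial s (1 : R)), mem_ideal_span_monomial_image]
  simp only [Set.exists_mem_image, sum_single_one_sub_single_sub_single_le_iff]

theorem mem_iInf_span_X_pair_iff (adj : σ → σ → Prop) (f : MvPolynomial σ R) :
    f ∈ ⨅ (p : σ × σ) (_ : p.1 ≠ p.2 ∧ ¬ adj p.1 p.2), Ideal.span {X p.1, X p.2} ↔
      ∀ d ∈ f.support, {w | d w = 0}.Pairwise adj := by
  simp only [Submodule.mem_iInf, ← Set.image_pair, mem_ideal_span_X_image]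
  constructor
  · intro h d hd u hu v hv huv
    by_contra hnadj
    obtain ⟨w, hw, hwd⟩ := h (u, v) ⟨huv, hnadj⟩ d hd
    rcases hw with rfl | rfl
    exacts [hwd hu, hwd hv]
  · rintro h ⟨u, v⟩ ⟨huv, hnadj⟩ d hd
    by_contra! hzero
    exact hnadj (h d hd (hzero u (by simp)) (hzero v (by simp)) huv)

end MonomialIdeal

theorem ferrers_dual_eq_alexander_dual_general {m n : ℕ} {K : Type*} [Field K]
    (hm : 0 < m)
    (lam : Fin m → ℕ)
    (hfirst : lam ⟨0, hm⟩ = n)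
    (hpos : ∀ i, 1 ≤ lam i)
    (A : (Fin m ⊕ Fin n) →₀ ℕ)
    (hA : A = ∑ v : Fin m ⊕ Fin n, Finsupp.single v 1)
    (adj : (Fin m ⊕ Fin n) → (Fin m ⊕ Fin n) → Prop)
    (hadj : adj = fun u v => ∃ (i : Fin m) (j : Fin n),
      ((u = Sum.inl i ∧ v = Sum.inr j) ∨ (u = Sum.inr j ∧ v = Sum.inl i)) ∧
        (j : ℕ) < lam i) :
    Ideal.span ((fun p : Fin m × Fin n =>
        monomial (A - Finsupp.single (Sum.inl p.1) 1 - Finsupp.single (Sum.inr p.2) 1)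
          (1 : K)) '' {p | (p.2 : ℕ) < lam p.1})
      = ⨅ (p : (Fin m ⊕ Fin n) × (Fin m ⊕ Fin n))
          (_ : p.1 ≠ p.2 ∧ ¬ adj p.1 p.2),
          Ideal.span {X p.1, X p.2} := by
  subst hA hadj
  have : Nonempty (Fin m) := ⟨⟨0, hm⟩⟩
  have hn : 0 < n := hfirst ▸ hpos ⟨0, hm⟩
  have hx : ∀ i, ∃ j : Fin n, (j : ℕ) < lam i := fun i => ⟨⟨0, hn⟩, hpos i⟩
  have hy : ∀ j : Fin n, ∃ i, (j : ℕ) < lam i := fun j => ⟨⟨0, hm⟩, hfirst ▸ j.2⟩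
  ext f
  have hdual := mem_iInf_span_X_pair_iff (bipartiteAdj fun i (j : Fin n) => (j : ℕ) < lam i) f
  refine (mem_span_monomial_compl_pair_iff (Sum.inl ∘ Prod.fst) (Sum.inr ∘ Prod.snd) _ f).trans
    ((forall₂_congr fun d _ => ?_).trans hdual.symm)
  exact exists_edge_superset_iff_pairwise_bipartiteAdj hx hy _

/-- for a Ferrers graph `G_λ` (edges `{x_i, y_j}` for `(j:ℕ) < λ i`, using
`0`-based indexing) with `λ 0 = n`, the LCM-dual of the Ferrers ideal `I_λ` equals the
Alexander dual of the edge ideal of the complement graph `G_λᶜ`, namely the intersection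
`⋂ (x_u, x_v)` over all non-edges `{u,v}` of `G_λ` (pairs of distinct vertices among the
`m + n` vertices that are not adjacent in `G_λ`). -/
theorem ferrers_dual_eq_alexander_dual {m n : ℕ} {K : Type*} [Field K]
    (hm : 0 < m) (hn : 0 < n)
    (lam : Fin m → ℕ)
    (hanti : ∀ i j : Fin m, i ≤ j → lam j ≤ lam i)
    (hfirst : lam ⟨0, hm⟩ = n)
    (hpos : ∀ i, 1 ≤ lam i)
    (A : (Fin m ⊕ Fin n) →₀ ℕ)
    (hA : A = ∑ v : Fin m ⊕ Fin n, Finsupp.single v 1)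
    (adj : (Fin m ⊕ Fin n) → (Fin m ⊕ Fin n) → Prop)
    (hadj : adj = fun u v => ∃ (i : Fin m) (j : Fin n),
      ((u = Sum.inl i ∧ v = Sum.inr j) ∨ (u = Sum.inr j ∧ v = Sum.inl i)) ∧
        (j : ℕ) < lam i) :
    Ideal.span ((fun p : Fin m × Fin n =>
        monomial (A - Finsupp.single (Sum.inl p.1) 1 - Finsupp.single (Sum.inr p.2) 1)
          (1 : K)) '' {p | (p.2 : ℕ) < lam p.1})
      = ⨅ (p : (Fin m ⊕ Fin n) × (Fin m ⊕ Fin n))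
          (_ : p.1 ≠ p.2 ∧ ¬ adj p.1 p.2),
          Ideal.span {X p.1, X p.2} :=
  ferrers_dual_eq_alexander_dual_general hm lam hfirst hpos A hA adj hadj
end

section
/- Let λ = (λ_1,...,λ_m) be a partition and μ = (0,1,...,m-1). Then the specialization \overline{I}_{λ-μ} of the generalized Ferrers ideal I_{λ-μ}, namely the ideal of K[x_1,...,x_n] generated by all x_i x_j with i ≤ j ≤ λ_i and 1 ≤ i ≤ m, is a strongly stable monomial ideal. -/
/-!
A monomial ideal is strongly stable as soon as its set of generating exponents is closed under the
moves `x_i ↦ x_j` (`j < i`): if a generator `x^s` divides `x^a` and `x_i ∣ x^a`, then either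
`x_i ∤ x^s`, and `x^s` still divides the moved monomial, or the moved generator divides it.
For the generators `x_u x_v`, `u ≤ v < λ u`, closure under moves is where the monotonicity of `λ`
enters: moving `u` down to `j` uses `λ u ≤ λ j`.
-/

open MvPolynomial Finsupp

section StronglyStable

variable {σ R : Type*} [CommSemiring R]

theorem monomial_one_mem_span_monomial_image_iff [Nontrivial R] {S : Set (σ →₀ ℕ)}
    {a : σ →₀ ℕ} :
    monomial a (1 : R) ∈ Ideal.span ((fun s => monomial s (1 : R)) '' S) ↔ ∃ s ∈ S, s ≤ a := by
  classical
  rw [mem_ideal_span_monomial_image, support_monomial, if_neg one_ne_zero]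
  simp

theorem le_sub_single_add_single_of_apply_eq_zero {s a : σ →₀ ℕ} {i : σ} (j : σ)
    (hsa : s ≤ a) (hsi : s i = 0) : s ≤ a - single i 1 + single j 1 := by
  intro k
  have := hsa k
  by_cases hk : k = i
  · subst hk; simp [hsi]
  · simp only [Finsupp.coe_add, coe_tsub, Pi.add_apply, Pi.sub_apply, single_eq_of_ne' (Ne.symm hk),
      tsub_zero]
    omega

theorem sub_single_add_single_le {s a : σ →₀ ℕ} {i : σ} (j : σ) (hsa : s ≤ a) :
    s - single i 1 + single j 1 ≤ a - single i 1 + single j 1 :=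
  add_le_add_left (tsub_le_tsub_right hsa _) _

variable [LinearOrder σ]

def Ideal.IsStronglyStable (I : Ideal (MvPolynomial σ R)) : Prop :=
  ∀ a : σ →₀ ℕ, monomial a (1 : R) ∈ I → ∀ i, a i ≠ 0 → ∀ j < i,
    monomial (a - single i 1 + single j 1) (1 : R) ∈ I

def IsClosedUnderMoves (S : Set (σ →₀ ℕ)) : Prop :=
  ∀ s ∈ S, ∀ i, s i ≠ 0 → ∀ j < i, s - single i 1 + single j 1 ∈ S

theorem isStronglyStable_span_monomial_image [Nontrivial R] {S : Set (σ →₀ ℕ)}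
    (hS : IsClosedUnderMoves S) :
    (Ideal.span ((fun s => monomial s (1 : R)) '' S)).IsStronglyStable := by
  intro a ha i _ j hji
  obtain ⟨s, hs, hsa⟩ := monomial_one_mem_span_monomial_image_iff.mp ha
  refine monomial_one_mem_span_monomial_image_iff.mpr ?_
  by_cases hsi : s i = 0
  · exact ⟨s, hs, le_sub_single_add_single_of_apply_eq_zero j hsa hsi⟩
  · exact ⟨_, hS s hs i hsi j hji, sub_single_add_single_le j hsa⟩

end StronglyStable

def specializedFerrersExponents (n m : ℕ) (lam : ℕ → ℕ) : Set (Fin n →₀ ℕ) :=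
  (fun p : Fin n × Fin n => single p.1 1 + single p.2 1) ''
    {p | (p.1 : ℕ) < m ∧ p.1 ≤ p.2 ∧ (p.2 : ℕ) < lam p.1}

theorem isClosedUnderMoves_specializedFerrersExponents {n m : ℕ} {lam : ℕ → ℕ}
    (hanti : ∀ i j : ℕ, i ≤ j → j < m → lam j ≤ lam i) :
    IsClosedUnderMoves (specializedFerrersExponents n m lam) := by
  rintro _ ⟨⟨u, v⟩, ⟨hum, huv, hvl⟩, rfl⟩ i hi j hji
  dsimp only at hum huv hvl hi ⊢
  have hiuv : i = u ∨ i = v := by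
    by_contra! h
    simp [Ne.symm h.1, Ne.symm h.2] at hi
  rcases hiuv with rfl | rfl
  · refine ⟨(j, v), ⟨(Fin.lt_def.mp hji).trans hum, hji.le.trans huv,
      hvl.trans_le (hanti j _ (Fin.le_def.mp hji.le) hum)⟩, ?_⟩
    rw [add_tsub_cancel_left, add_comm]
  · simp only [add_tsub_cancel_right]
    rcases le_total u j with huj | hju
    · exact ⟨(u, j), ⟨hum, huj, (Fin.lt_def.mp hji).trans hvl⟩, rfl⟩
    · refine ⟨(j, u), ⟨(Fin.le_def.mp hju).trans_lt hum, hju, ?_⟩, add_comm _ _⟩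
      exact ((Fin.le_def.mp huv).trans_lt hvl).trans_le (hanti j u hju hum)

theorem specialization_strongly_stable_general {m n : ℕ} {K : Type*} [Field K]
    (lam : ℕ → ℕ)
    (hanti : ∀ i j : ℕ, i ≤ j → j < m → lam j ≤ lam i)
    (I : Ideal (MvPolynomial (Fin n) K))
    (hI : I = Ideal.span ((fun p : Fin n × Fin n =>
        monomial (Finsupp.single p.1 1 + Finsupp.single p.2 1) (1 : K)) ''
      {p | (p.1 : ℕ) < m ∧ p.1 ≤ p.2 ∧ (p.2 : ℕ) < lam (p.1 : ℕ)})) :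
    ∀ a : Fin n →₀ ℕ, monomial a (1 : K) ∈ I →
      ∀ i : Fin n, a i ≠ 0 → ∀ j : Fin n, j < i →
        monomial (a - Finsupp.single i 1 + Finsupp.single j 1) (1 : K) ∈ I := by
  have h := isStronglyStable_span_monomial_image (R := K)
    (isClosedUnderMoves_specializedFerrersExponents (n := n) hanti)
  rw [specializedFerrersExponents, Set.image_image] at h
  exact hI ▸ h

/-- for a partition `λ = (λ 0 ≥ … ≥ λ (m-1))` with `λ i > i` and
`μ = (0,1,…,m-1)`, the specialization of the generalized Ferrers ideal `I_{λ-μ}`, namely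
the ideal of `K[x₁,…,xₙ]` generated by the monomials `x_i x_j` with (0-based indices)
`i ≤ j < λ i` and `i < m`, is a strongly stable monomial ideal: whenever a monomial
`x^a ∈ I` is divisible by `x_i` and `j < i`, the monomial `x_j · x^a / x_i` is in `I`. -/
theorem specialization_strongly_stable {m n : ℕ} {K : Type*} [Field K]
    (hm : 0 < m) (hmn : m ≤ n)
    (lam : ℕ → ℕ)
    (hanti : ∀ i j : ℕ, i ≤ j → j < m → lam j ≤ lam i)
    (hbound : ∀ i : ℕ, i < m → lam i ≤ n)
    (hlow : ∀ i : ℕ, i < m → i < lam i)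
    (I : Ideal (MvPolynomial (Fin n) K))
    (hI : I = Ideal.span ((fun p : Fin n × Fin n =>
        monomial (Finsupp.single p.1 1 + Finsupp.single p.2 1) (1 : K)) ''
      {p | (p.1 : ℕ) < m ∧ p.1 ≤ p.2 ∧ (p.2 : ℕ) < lam (p.1 : ℕ)})) :
    ∀ a : Fin n →₀ ℕ, monomial a (1 : K) ∈ I →
      ∀ i : Fin n, a i ≠ 0 → ∀ j : Fin n, j < i →
        monomial (a - Finsupp.single i 1 + Finsupp.single j 1) (1 : K) ∈ I :=
  specialization_strongly_stable_general lam hanti I hI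
end

section
/- Let λ = (λ_1,...,λ_m) be a partition with λ_i > μ_i where μ = (μ_1,...,μ_m) satisfies 0 ≤ μ_1 ≤ ... ≤ μ_m < λ_m and μ_i ≥ i−1 for all i. Then the generalized Ferrers ideal I_{λ-μ} = (x_i y_j : μ_i < j ≤ λ_i) and its specialization \overline{I}_{λ-μ} (replacing y_j by x_j) have the same number of minimal monomial generators, namely λ_1 + ... + λ_m − (μ_1 + ... + μ_m). -/
/-!
In 0-based indexing the paper's conditions `μ_i ≥ i − 1` and `μ_i < j` read `i ≤ μ i` and
`μ i ≤ j`. Row `i` of the diagram contributes the interval `[μ i, λ i)` of column indices,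
whence the count. Since `i ≤ μ i ≤ j`, every generator `x_i y_j` has `i ≤ j`, and an unordered
pair `{i, j}` — all that `x_i x_j` remembers — has only one ordered representative with `i ≤ j`.
-/

open Finset

lemma range_filter_le_and_lt_eq_Ico {a b n : ℕ} (hb : b ≤ n) :
    (range n).filter (fun j => a ≤ j ∧ j < b) = Ico a b := by
  ext j
  simp only [mem_filter, mem_range, mem_Ico]
  exact ⟨And.right, fun h => ⟨h.2.trans_le hb, h⟩⟩

lemma card_filter_range_product_Ico {m n : ℕ} (lo hi : ℕ → ℕ) (hhi : ∀ i < m, hi i ≤ n) :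
    ((range m ×ˢ range n).filter fun p => lo p.1 ≤ p.2 ∧ p.2 < hi p.1).card
      = ∑ i ∈ range m, (hi i - lo i) := by
  rw [card_filter, sum_product]
  refine sum_congr rfl fun i hi_mem => ?_
  simp only [← card_filter, range_filter_le_and_lt_eq_Ico (hhi i (mem_range.mp hi_mem)),
    Nat.card_Ico]

lemma Finsupp.injOn_single_add_single {α M : Type*} [LinearOrder α] [AddCommMonoid M] {u : M}
    (hu : u ≠ 0) (huu : u + u ≠ 0) :
    Set.InjOn (fun p : α × α => single p.1 u + single p.2 u) {p | p.1 ≤ p.2} := by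
  intro p hp q hq heq
  simp only [Set.mem_ofPred_eq] at hp hq
  rcases (single_add_single_eq_single_add_single hu hu).mp heq with
    ⟨h1, h2⟩ | ⟨-, h1, h2⟩ | ⟨h, -, -⟩
  · exact Prod.ext h1 h2
  · exact Prod.ext (by order) (by order)
  · exact absurd h huu

theorem specialization_generator_count_general {m n : ℕ}
    (lam mu : ℕ → ℕ)
    (hbound : ∀ i : ℕ, i < m → lam i ≤ n)
    (hmu_ge : ∀ i : ℕ, i < m → i ≤ mu i)
    (S : Finset (ℕ × ℕ))
    (hS : S = ((Finset.range m) ×ˢ (Finset.range n)).filter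
      (fun p => mu p.1 ≤ p.2 ∧ p.2 < lam p.1)) :
    S.card = ∑ i ∈ Finset.range m, (lam i - mu i) ∧
    (S.image fun p => Finsupp.single p.1 (1 : ℕ) + Finsupp.single p.2 1).card
      = ∑ i ∈ Finset.range m, (lam i - mu i) := by
  have hcard : S.card = ∑ i ∈ range m, (lam i - mu i) :=
    hS ▸ card_filter_range_product_Ico mu lam hbound
  have hdiag : (S : Set (ℕ × ℕ)) ⊆ {p | p.1 ≤ p.2} := by
    intro p hp
    simp only [hS, coe_filter, mem_product, mem_range, Set.mem_ofPred_eq] at hp ⊢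
    exact (hmu_ge p.1 hp.1.1).trans hp.2.1
  refine ⟨hcard, ?_⟩
  rw [card_image_of_injOn ((Finsupp.injOn_single_add_single one_ne_zero (by norm_num)).mono hdiag),
    hcard]

/-- (0-based indexing) let `λ` be a partition on `{0,…,m-1}` and
`μ 0 ≤ μ 1 ≤ … ≤ μ (m-1) < λ (m-1)` with `μ i ≥ i`.  The generalized Ferrers ideal
`I_{λ-μ}` is generated by the `x_i y_j` with `μ i ≤ j < λ i`, and its specialization
replaces `y_j` by `x_j`, giving the monomials `x_i x_j` (exponent vector
`single i 1 + single j 1`).  Both have the same number of minimal monomial generators,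
namely `∑ i (λ i − μ i)`; in particular the specialization map is injective on the
generators. -/
theorem specialization_generator_count {m n : ℕ}
    (hm : 0 < m) (hmn : m ≤ n)
    (lam mu : ℕ → ℕ)
    (hanti : ∀ i j : ℕ, i ≤ j → j < m → lam j ≤ lam i)
    (hbound : ∀ i : ℕ, i < m → lam i ≤ n)
    (hmu_mono : ∀ i j : ℕ, i ≤ j → j < m → mu i ≤ mu j)
    (hmu_lt : mu (m - 1) < lam (m - 1))
    (hmu_ge : ∀ i : ℕ, i < m → i ≤ mu i)
    (S : Finset (ℕ × ℕ))
    (hS : S = ((Finset.range m) ×ˢ (Finset.range n)).filter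
      (fun p => mu p.1 ≤ p.2 ∧ p.2 < lam p.1)) :
    S.card = ∑ i ∈ Finset.range m, (lam i - mu i) ∧
    (S.image fun p => Finsupp.single p.1 (1 : ℕ) + Finsupp.single p.2 1).card
      = ∑ i ∈ Finset.range m, (lam i - mu i) :=
  specialization_generator_count_general lam mu hbound hmu_ge S hS
end

section
/- Let λ = (λ_1,...,λ_m) be a partition with λ_i ≥ i and m > 1, and let X_λ be the polyhedral cell complex with vertices the pairs (i,j), i ≤ j ≤ λ_i, edges between horizontally and vertically adjacent pairs, and square 2-faces where all four corners are present. Then the number of vertices is Σ_{i=1}^m λ_i − C(m,2), the number of edges is λ_1 + 2(λ_2+...+λ_m) − m^2, and the number of 2-faces is λ_2+...+λ_m − C(m+1,2) + 1. -/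
/-!
Row `i` of the tableau contains the cells `(i, j)` with `i ≤ j < λ i`, so every count in the
statement is a row sum: row `i` contributes `λ i - i` vertices and `λ i - (i + 1)` horizontal
edges, and for `i ≥ 1` it contributes `λ i - i` vertical edges and `λ i - (i + 1)` squares
joining it to row `i - 1`. Since `λ i > i`, these truncated differences are honest, and the
totals follow from `∑_{i<m} i = C(m, 2)`, `∑_{i<m} (i + 1) = C(m + 1, 2)` and
`C(m, 2) + C(m + 1, 2) = m²`.
-/

open Finset

theorem sum_range_id_eq_choose_two (m : ℕ) : ∑ i ∈ range m, i = m.choose 2 := by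
  rw [sum_range_id, Nat.choose_two_right]

theorem sum_range_succ_id_eq_choose_two (m : ℕ) : ∑ i ∈ range m, (i + 1) = (m + 1).choose 2 := by
  rw [← sum_range_id_eq_choose_two, sum_range_succ', add_zero]

theorem choose_two_add_choose_succ_two (m : ℕ) : m.choose 2 + (m + 1).choose 2 = m ^ 2 := by
  induction m with
  | zero => rfl
  | succ k ih =>
    rw [Nat.choose_succ_succ' (k + 1), Nat.choose_one_right, Nat.choose_succ_succ' k,
      Nat.choose_one_right] at *
    nlinarith [ih]

theorem sum_tsub_add_sum {ι M : Type*} [AddCommMonoid M] [PartialOrder M] [ExistsAddOfLE M]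
    [AddLeftMono M] [Sub M] [OrderedSub M] {s : Finset ι} {f g : ι → M}
    (h : ∀ i ∈ s, g i ≤ f i) : ∑ i ∈ s, (f i - g i) + ∑ i ∈ s, g i = ∑ i ∈ s, f i := by
  rw [← sum_add_distrib]
  exact sum_congr rfl fun i hi => tsub_add_cancel_of_le (h i hi)

theorem card_filter_product {α β : Type*} (s : Finset α) (t : Finset β) (P : α → β → Prop)
    [∀ i j, Decidable (P i j)] :
    #{p ∈ s ×ˢ t | P p.1 p.2} = ∑ i ∈ s, #{j ∈ t | P i j} := by
  simp only [card_filter, sum_product]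

section RowSums

variable {m n : ℕ}

theorem card_filter_range_product_next_row (P : ℕ → ℕ → Prop) [∀ i j, Decidable (P i j)] :
    #{p ∈ range m ×ˢ range n | p.1 + 1 < m ∧ P (p.1 + 1) p.2}
      = ∑ i ∈ Ico 1 m, #{j ∈ range n | P i j} := by
  rw [card_filter_product _ _ (fun i j => i + 1 < m ∧ P (i + 1) j)]
  cases m with
  | zero => rfl
  | succ k =>
    rw [sum_range_succ, sum_Ico_eq_sum_range, Nat.add_sub_cancel]
    simp only [lt_irrefl, false_and, filter_false, card_empty, add_zero]
    refine sum_congr rfl fun i hi => ?_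
    simp only [add_comm 1 i, add_lt_add_iff_right, mem_range.mp hi, true_and]

theorem card_filter_range_le_lt {a b : ℕ} (hb : b ≤ n) :
    #{j ∈ range n | a ≤ j ∧ j < b} = b - a := by
  rw [← Nat.card_Ico]
  congr 1
  ext j
  simp only [mem_filter, mem_range, mem_Ico]
  omega

theorem card_filter_range_le_succ_lt {a b : ℕ} (hb : b ≤ n) :
    #{j ∈ range n | a ≤ j ∧ j + 1 < b} = b - (a + 1) := by
  rw [← Nat.sub_sub, Nat.sub_right_comm, ← Nat.card_Ico]
  congr 1
  ext j
  simp only [mem_filter, mem_range, mem_Ico]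
  omega

end RowSums

theorem cell_complex_counts_general {m n : ℕ}
    (hm : 1 < m)
    (lam : ℕ → ℕ)
    (hbound : ∀ i : ℕ, i < m → lam i ≤ n)
    (hlow : ∀ i : ℕ, i < m → i < lam i)
    (Vert Hedge Vedge Face : Finset (ℕ × ℕ))
    (hVert : Vert = ((Finset.range m) ×ˢ (Finset.range n)).filter
      (fun p => p.1 ≤ p.2 ∧ p.2 < lam p.1))
    (hHedge : Hedge = ((Finset.range m) ×ˢ (Finset.range n)).filter
      (fun p => p.1 ≤ p.2 ∧ p.2 + 1 < lam p.1))
    (hVedge : Vedge = ((Finset.range m) ×ˢ (Finset.range n)).filter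
      (fun p => p.1 + 1 < m ∧ p.1 + 1 ≤ p.2 ∧ p.2 < lam (p.1 + 1)))
    (hFace : Face = ((Finset.range m) ×ˢ (Finset.range n)).filter
      (fun p => p.1 + 1 < m ∧ p.1 + 1 ≤ p.2 ∧ p.2 + 1 < lam (p.1 + 1))) :
    Vert.card + Nat.choose m 2 = ∑ i ∈ Finset.range m, lam i ∧
    Hedge.card + Vedge.card + m ^ 2
      = lam 0 + 2 * ∑ i ∈ Finset.Ico 1 m, lam i ∧
    Face.card + Nat.choose (m + 1) 2 = (∑ i ∈ Finset.Ico 1 m, lam i) + 1 := by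
  have hV : Vert.card + ∑ i ∈ range m, i = ∑ i ∈ range m, lam i := by
    rw [hVert, card_filter_product _ _ (fun i j => i ≤ j ∧ j < lam i),
      sum_congr rfl fun i hi => card_filter_range_le_lt (hbound i (mem_range.mp hi))]
    exact sum_tsub_add_sum fun i hi => (hlow i (mem_range.mp hi)).le
  have hH : Hedge.card + ∑ i ∈ range m, (i + 1) = ∑ i ∈ range m, lam i := by
    rw [hHedge, card_filter_product _ _ (fun i j => i ≤ j ∧ j + 1 < lam i),
      sum_congr rfl fun i hi => card_filter_range_le_succ_lt (hbound i (mem_range.mp hi))]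
    exact sum_tsub_add_sum fun i hi => hlow i (mem_range.mp hi)
  have hVe : Vedge.card + ∑ i ∈ Ico 1 m, i = ∑ i ∈ Ico 1 m, lam i := by
    rw [hVedge, card_filter_range_product_next_row (fun i j => i ≤ j ∧ j < lam i),
      sum_congr rfl fun i hi => card_filter_range_le_lt (hbound i (mem_Ico.mp hi).2)]
    exact sum_tsub_add_sum fun i hi => (hlow i (mem_Ico.mp hi).2).le
  have hF : Face.card + ∑ i ∈ Ico 1 m, (i + 1) = ∑ i ∈ Ico 1 m, lam i := by
    rw [hFace, card_filter_range_product_next_row (fun i j => i ≤ j ∧ j + 1 < lam i),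
      sum_congr rfl fun i hi => card_filter_range_le_succ_lt (hbound i (mem_Ico.mp hi).2)]
    exact sum_tsub_add_sum fun i hi => hlow i (mem_Ico.mp hi).2
  have hm₀ : 0 < m := by omega
  have hid := sum_range_eq_add_Ico (fun i => i) hm₀
  have hsucc := sum_range_eq_add_Ico (fun i => i + 1) hm₀
  have hlam := sum_range_eq_add_Ico lam hm₀
  rw [sum_range_id_eq_choose_two] at hid hV
  rw [sum_range_succ_id_eq_choose_two] at hsucc hH
  have hsq := choose_two_add_choose_succ_two m
  refine ⟨?_, ?_, ?_⟩ <;> omega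

/-- (0-based indexing) let `λ` be a partition with `m > 1` rows, `λ i > i`,
`λ i ≤ n`, and let `X_λ` be the polyhedral cell complex whose vertices are the pairs
`(i,j)` with `i ≤ j < λ i` (`i < m`), whose edges join horizontally adjacent pairs
`(i,j)-(i,j+1)` and vertically adjacent pairs `(i,j)-(i+1,j)`, and whose square 2-faces
have all four corners `(i,j),(i,j+1),(i+1,j),(i+1,j+1)` present.  Then (written without
truncated subtraction): `#vertices = ∑ λ i − C(m,2)`,
`#edges = λ 0 + 2·∑_{i≥1} λ i − m²`, and `#faces = ∑_{i≥1} λ i − C(m+1,2) + 1`. -/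
theorem cell_complex_counts {m n : ℕ}
    (hm : 1 < m)
    (lam : ℕ → ℕ)
    (hanti : ∀ i j : ℕ, i ≤ j → j < m → lam j ≤ lam i)
    (hbound : ∀ i : ℕ, i < m → lam i ≤ n)
    (hlow : ∀ i : ℕ, i < m → i < lam i)
    (Vert Hedge Vedge Face : Finset (ℕ × ℕ))
    (hVert : Vert = ((Finset.range m) ×ˢ (Finset.range n)).filter
      (fun p => p.1 ≤ p.2 ∧ p.2 < lam p.1))
    (hHedge : Hedge = ((Finset.range m) ×ˢ (Finset.range n)).filter
      (fun p => p.1 ≤ p.2 ∧ p.2 + 1 < lam p.1))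
    (hVedge : Vedge = ((Finset.range m) ×ˢ (Finset.range n)).filter
      (fun p => p.1 + 1 < m ∧ p.1 + 1 ≤ p.2 ∧ p.2 < lam (p.1 + 1)))
    (hFace : Face = ((Finset.range m) ×ˢ (Finset.range n)).filter
      (fun p => p.1 + 1 < m ∧ p.1 + 1 ≤ p.2 ∧ p.2 + 1 < lam (p.1 + 1))) :
    Vert.card + Nat.choose m 2 = ∑ i ∈ Finset.range m, lam i ∧
    Hedge.card + Vedge.card + m ^ 2
      = lam 0 + 2 * ∑ i ∈ Finset.Ico 1 m, lam i ∧
    Face.card + Nat.choose (m + 1) 2 = (∑ i ∈ Finset.Ico 1 m, lam i) + 1 :=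
  cell_complex_counts_general hm lam hbound hlow Vert Hedge Vedge Face hVert hHedge hVedge hFace
end
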